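/- The metric topology on X coincides with the quotient topology induced by the coding map ⟦·⟧ : E^ω → X of a digit space. -/
import Mathlib


/-- `seqComp α n` is the composition `α 0 ∘ α 1 ∘ ⋯ ∘ α (n-1)`. -/
def seqComp {X : Type*} (α : ℕ → X → X) : ℕ → X → X
  | 0 => id
  | n + 1 => seqComp α n ∘ α n

theorem seqComp_congr {X : Type*} (α β : ℕ → X → X) (n : ℕ) (h : ∀ i < n, α i = β i) :
    seqComp α n = seqComp β n := by
  induction n with
  | zero => rfl
  | succ n ih =>
    show seqComp α n ∘ α n = seqComp β n ∘ β n
    rw [ih fun i hi => h i (Nat.lt_succ_of_lt hi), h n (Nat.lt_succ_self n)]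

/-- The metric topology on `X` coincides with the quotient (coinduced) topology induced by
the coding map `⟦·⟧ : E^ω → X` of a digit space.  Here `E^ω` is the space `ℕ → ↥E` of
digit sequences; since `E` is a finite subset of the Hausdorff space `X → X`, the topology
on `ℕ → ↥E` is the countable product of discrete spaces, i.e. the topology of the metric
`δ(α,β) = 2^{-min{n : α n ≠ β n}}`. -/
theorem stmt2 {X : Type*} [MetricSpace X] [CompactSpace X] [Nonempty X]
    (E : Finset (X → X))
    (hcontr : ∀ e ∈ E, ∃ K : NNReal, ContractingWith K e)
    (hcover : ∀ x : X, ∃ e ∈ E, x ∈ Set.range e)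
    (val : (ℕ → ↥E) → X)
    (hval : ∀ α : ℕ → ↥E, ∀ n, val α ∈ Set.range (seqComp (fun k => (α k : X → X)) n)) :
    TopologicalSpace.coinduced val (inferInstance : TopologicalSpace (ℕ → ↥E)) =
      (inferInstance : TopologicalSpace X) := by
  classical
  obtain ⟨x0⟩ := ‹Nonempty X›
  obtain ⟨e0, he0, -⟩ := hcover x0
  haveI : Nonempty ↥E := ⟨⟨e0, he0⟩⟩
  choose K hK using fun e : ↥E => hcontr e e.2
  set r : NNReal := Finset.univ.sup K with hr
  have hrlt : r < 1 := by
    rw [hr, Finset.sup_lt_iff (by norm_num : (⊥ : NNReal) < 1)]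
    exact fun e _ => (hK e).1
  have hrlt' : (r : ℝ) < 1 := by exact_mod_cast hrlt
  have hlip : ∀ e : ↥E, LipschitzWith r (e : X → X) := fun e =>
    (hK e).2.weaken (Finset.le_sup (Finset.mem_univ e))
  have hlipn : ∀ (α : ℕ → ↥E) (n : ℕ),
      LipschitzWith (r ^ n) (seqComp (fun k => (α k : X → X)) n) := by
    intro α n
    induction n with
    | zero => simpa [seqComp] using LipschitzWith.id
    | succ n ih =>
      rw [pow_succ]
      exact ih.comp (hlip (α n))
  set D := Metric.diam (Set.univ : Set X) with hD
  have hbd : Bornology.IsBounded (Set.univ : Set X) := isCompact_univ.isBounded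
  -- two points in the range of `seqComp _ n` are `r^n * D` close
  have hdiam : ∀ (α : ℕ → ↥E) (n : ℕ) (x y : X),
      x ∈ Set.range (seqComp (fun k => (α k : X → X)) n) →
      y ∈ Set.range (seqComp (fun k => (α k : X → X)) n) →
      dist x y ≤ (r : ℝ) ^ n * D := by
    rintro α n x y ⟨a, rfl⟩ ⟨b, rfl⟩
    calc dist _ _ ≤ (r ^ n : NNReal) * dist a b := (hlipn α n).dist_le_mul a b
    _ ≤ (r : ℝ) ^ n * D := by
        push_cast
        exact mul_le_mul_of_nonneg_left
          (Metric.dist_le_diam_of_mem hbd (Set.mem_univ a) (Set.mem_univ b))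
          (by positivity)
  have htend : Filter.Tendsto (fun n => (r : ℝ) ^ n * D) Filter.atTop (nhds 0) := by
    simpa using
      (tendsto_pow_atTop_nhds_zero_of_lt_one r.coe_nonneg hrlt').mul_const D
  -- continuity of `val`
  haveI : Finite ↥E := inferInstance
  have hcont : Continuous val := by
    rw [continuous_iff_continuousAt]
    intro α
    rw [ContinuousAt, Metric.tendsto_nhds]
    intro ε hε
    obtain ⟨n, hn⟩ := (htend.eventually (gt_mem_nhds hε)).exists
    have hU : {β : ℕ → ↥E | ∀ i < n, β i = α i} ∈ nhds α := by
      have : {β : ℕ → ↥E | ∀ i < n, β i = α i} =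
          ⋂ i ∈ Finset.range n, (fun β : ℕ → ↥E => β i) ⁻¹' {α i} := by
        ext β; simp [Set.mem_iInter]
      rw [this]
      exact (isOpen_biInter_finset fun i _ =>
        (continuous_apply i).isOpen_preimage _ (isOpen_discrete _)).mem_nhds
        (by simp)
    filter_upwards [hU] with β hβ
    calc dist (val β) (val α) ≤ (r : ℝ) ^ n * D := by
          obtain ⟨a, ha⟩ := hval β n
          obtain ⟨b, hb⟩ := hval α n
          refine hdiam β n _ _ ⟨a, ha⟩ ⟨b, ?_⟩
          rw [seqComp_congr (fun k => (β k : X → X)) (fun k => (α k : X → X)) n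
            (fun i hi => by simp [hβ i hi])]
          exact hb
      _ < ε := hn
  -- surjectivity of `val`
  have hsurj : Function.Surjective val := by
    intro x
    choose g hgE hgr using hcover
    choose z hz using hgr
    set α : ℕ → ↥E := fun n => ⟨g (z^[n] x), hgE _⟩ with hα
    have hx : ∀ n, seqComp (fun k => (α k : X → X)) n (z^[n] x) = x := by
      intro n
      induction n with
      | zero => rfl
      | succ n ih =>
        show seqComp (fun k => (α k : X → X)) n ((α n : X → X) (z^[n+1] x)) = x
        rw [Function.iterate_succ_apply']
        simpa [hα, hz] using ih
    refine ⟨α, ?_⟩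
    have hd : ∀ n, dist (val α) x ≤ (r : ℝ) ^ n * D := fun n =>
      hdiam α n _ _ (hval α n) ⟨z^[n] x, hx n⟩
    have : dist (val α) x ≤ 0 := ge_of_tendsto' htend hd
    exact eq_of_dist_eq_zero (le_antisymm this dist_nonneg)
  haveI : CompactSpace (ℕ → ↥E) := inferInstance
  exact ((hcont.isClosedMap.isQuotientMap hcont hsurj).eq_coinduced).symm
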